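/- arXiv:1612.07136 — 8 statements merged into one kernel-verified Lean document; each statement's English description precedes it below -/
import Mathlib

section
/- For every n ≥ 1 and all reals c < d, the image of the moment curve η: [c,d] → ℝⁿ, η(t) = (t, t², …, tⁿ), is a non-trivial self-affine set: there exists an affine IFS {f_i}_{i=1}^ℓ on ℝⁿ with η([c,d]) = ⋃_{i=1}^ℓ f_i(η([c,d])). -/
open Set

/-- `f : ℝⁿ → ℝⁿ` is an invertible, strictly contractive affine map
(its linear part is bijective and has operator norm `< 1`). -/
def IsAffineContraction {n : ℕ}
    (f : EuclideanSpace ℝ (Fin n) → EuclideanSpace ℝ (Fin n)) : Prop :=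
  ∃ (T : EuclideanSpace ℝ (Fin n) →L[ℝ] EuclideanSpace ℝ (Fin n))
    (b : EuclideanSpace ℝ (Fin n)),
    Function.Bijective T ∧ ‖T‖ < 1 ∧ ∀ x, f x = T x + b

/-- `E ⊆ ℝⁿ` is self-affine: it is nonempty, compact and is the attractor of an
affine iterated function system. -/
def IsSelfAffine {n : ℕ} (E : Set (EuclideanSpace ℝ (Fin n))) : Prop :=
  E.Nonempty ∧ IsCompact E ∧
    ∃ (ℓ : ℕ) (f : Fin ℓ → (EuclideanSpace ℝ (Fin n) → EuclideanSpace ℝ (Fin n))),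
      (∀ i, IsAffineContraction (f i)) ∧ E = ⋃ i, f i '' E

/-- The moment curve `t ↦ (t, t², …, tⁿ)` in ℝⁿ. -/
def momentCurve (n : ℕ) (t : ℝ) : EuclideanSpace ℝ (Fin n) :=
  WithLp.toLp 2 (fun i => t ^ ((i : ℕ) + 1))

/-! Substituting `t ↦ α * t + β` into the moment curve acts on `ℝⁿ` by an affine map with linear
part `S_β * diag(α, α², …, αⁿ)`, where `S_β = ((i+1).choose (j+1) * β ^ (i-j))` is lower
unitriangular (binomial theorem). The piece `[cᵢ, cᵢ + (d - c)/(m+1)]` of `[c, d]` is the image of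
`[c, d]` under `t ↦ α * (t - c) + cᵢ` with `α = 1/(m+1)`, whose lift has operator norm at most
`‖S_{cᵢ}‖ * α * ‖S_{-c}‖`. As `β ↦ ‖S_β‖` is bounded on the compact `[c, d]`, these lifts are
contractions once `m` is large. -/

open Matrix
open scoped Matrix.Norms.L2Operator

theorem Matrix.bijective_toEuclideanCLM_of_isUnit_det {𝕜 ι : Type*} [RCLike 𝕜] [Fintype ι]
    [DecidableEq ι] {M : Matrix ι ι 𝕜} (h : IsUnit M.det) :
    Function.Bijective (toEuclideanCLM (𝕜 := 𝕜) M) :=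
  ContinuousLinearMap.isUnit_iff_bijective.mp (((isUnit_iff_isUnit_det M).mpr h).map _)

theorem IsAffineContraction.of_matrix {n : ℕ} {M : Matrix (Fin n) (Fin n) ℝ} (hdet : IsUnit M.det)
    (hM : ‖M‖ < 1) {f : EuclideanSpace ℝ (Fin n) → EuclideanSpace ℝ (Fin n)}
    {b : EuclideanSpace ℝ (Fin n)} (hf : ∀ x, f x = toEuclideanCLM (𝕜 := ℝ) M x + b) :
    IsAffineContraction f :=
  ⟨_, b, bijective_toEuclideanCLM_of_isUnit_det hdet, hM, hf⟩

theorem add_pow_succ_eq_sum_range {R : Type*} [CommSemiring R] {n i : ℕ} (hi : i < n) (s t : R) :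
    (s + t) ^ (i + 1) =
      ∑ j ∈ Finset.range n, ((i + 1).choose (j + 1) : R) * t ^ (i - j) * s ^ (j + 1) +
        t ^ (i + 1) := by
  rw [add_pow, Finset.sum_range_succ', ← Finset.sum_range_add_sum_Ico _ hi,
    Finset.sum_eq_zero (s := Finset.Ico _ _) fun j hj => by
      rw [Nat.choose_eq_zero_of_lt (by simp at hj; omega)]; simp]
  simp only [Nat.succ_sub_succ, add_zero, pow_zero, Nat.choose_zero_right, Nat.cast_one, one_mul,
    mul_one]
  exact congrArg (· + _) (Finset.sum_congr rfl fun j _ => by ring)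

theorem iUnion_Icc_add_mul {α : Type*} [Field α] [LinearOrder α] [IsStrictOrderedRing α]
    (a δ : α) (hδ : 0 ≤ δ) (m : ℕ) :
    ⋃ i : Fin (m + 1), Icc (a + i * δ) (a + (i + 1) * δ) = Icc a (a + (m + 1) * δ) := by
  induction m with
  | zero => simpa using iUnion_const _
  | succ m ih =>
    rw [iUnion_fin_add_one_eq_iUnion_castSucc]
    simp only [Function.comp_def, Fin.val_castSucc, Fin.val_last, ih]
    push_cast
    exact Icc_union_Icc_eq_Icc (by nlinarith) (by nlinarith)

def momentShift (n : ℕ) (β : ℝ) : Matrix (Fin n) (Fin n) ℝ :=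
  of fun i j => ((i + 1 : ℕ).choose (j + 1) : ℝ) * β ^ ((i : ℕ) - j)

def momentScale (n : ℕ) (α : ℝ) : Matrix (Fin n) (Fin n) ℝ :=
  diagonal fun i => α ^ ((i : ℕ) + 1)

theorem continuous_momentCurve (n : ℕ) : Continuous (momentCurve n) := by
  unfold momentCurve; fun_prop

theorem momentCurve_add (n : ℕ) (s β : ℝ) :
    momentCurve n (s + β) =
      toEuclideanCLM (𝕜 := ℝ) (momentShift n β) (momentCurve n s) + momentCurve n β := by
  ext i
  simp only [momentCurve, PiLp.add_apply, toEuclideanCLM_toLp, mulVec, dotProduct, momentShift,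
    of_apply]
  rw [add_pow_succ_eq_sum_range i.2, Fin.sum_univ_eq_sum_range
    (fun j => ((i + 1 : ℕ).choose (j + 1) : ℝ) * β ^ ((i : ℕ) - j) * s ^ (j + 1))]

theorem momentCurve_mul (n : ℕ) (α s : ℝ) :
    momentCurve n (α * s) = toEuclideanCLM (𝕜 := ℝ) (momentScale n α) (momentCurve n s) := by
  ext i
  simp [momentCurve, momentScale, mulVec_diagonal, mul_pow]

theorem det_momentShift (n : ℕ) (β : ℝ) : (momentShift n β).det = 1 := by
  rw [det_of_isLowerTriangular _ fun i j (hij : i < j) => ?_]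
  · simp [momentShift]
  · simp [momentShift, Nat.choose_eq_zero_of_lt (Nat.succ_lt_succ hij)]

theorem continuous_momentShift (n : ℕ) : Continuous (momentShift n) :=
  continuous_pi fun _ => continuous_pi fun _ => by simp only [momentShift, of_apply]; fun_prop

theorem norm_momentScale_le {n : ℕ} {α : ℝ} (h₀ : 0 ≤ α) (h₁ : α ≤ 1) :
    ‖momentScale n α‖ ≤ α := by
  rw [momentScale, l2_opNorm_diagonal, pi_norm_le_iff_of_nonneg h₀]
  intro i
  rw [Real.norm_eq_abs, abs_pow, abs_of_nonneg h₀]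
  exact pow_le_of_le_one h₀ h₁ (Nat.succ_ne_zero _)

theorem exists_isAffineContraction_momentCurve_rescale (n : ℕ) {α : ℝ} (h₀ : 0 < α) (h₁ : α ≤ 1)
    (a b : ℝ) (hK : ‖momentShift n b‖ * α * ‖momentShift n (-a)‖ < 1) :
    ∃ f : EuclideanSpace ℝ (Fin n) → EuclideanSpace ℝ (Fin n), IsAffineContraction f ∧
      ∀ t, f (momentCurve n t) = momentCurve n (α * (t - a) + b) := by
  set M := momentShift n b * momentScale n α * momentShift n (-a)
  refine ⟨fun x => toEuclideanCLM (𝕜 := ℝ) M x +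
      (toEuclideanCLM (𝕜 := ℝ) (momentShift n b * momentScale n α) (momentCurve n (-a)) +
        momentCurve n b), .of_matrix ?_ ?_ fun _ => rfl, fun t => ?_⟩
  · simp only [M, det_mul, det_momentShift, momentScale, det_diagonal]
    simpa using (Finset.prod_pos fun i _ => pow_pos h₀ _).ne'
  · calc ‖M‖ ≤ ‖momentShift n b‖ * ‖momentScale n α‖ * ‖momentShift n (-a)‖ :=
          (l2_opNorm_mul _ _).trans (mul_le_mul_of_nonneg_right (l2_opNorm_mul _ _) (norm_nonneg _))
      _ ≤ ‖momentShift n b‖ * α * ‖momentShift n (-a)‖ := by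
          gcongr; exact norm_momentScale_le h₀.le h₁
      _ < 1 := hK
  · rw [sub_eq_add_neg, momentCurve_add, momentCurve_mul, momentCurve_add]
    simp only [M, map_mul, mul_apply_eq_comp, map_add]
    abel

theorem exists_isAffineContraction_image_momentCurve_Icc (n : ℕ) {α : ℝ} (h₀ : 0 < α)
    (h₁ : α ≤ 1) (a b x : ℝ) (hK : ‖momentShift n x‖ * α * ‖momentShift n (-a)‖ < 1) :
    ∃ f : EuclideanSpace ℝ (Fin n) → EuclideanSpace ℝ (Fin n), IsAffineContraction f ∧
      f '' (momentCurve n '' Icc a b) = momentCurve n '' Icc x (x + α * (b - a)) := by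
  obtain ⟨f, hf, hfη⟩ := exists_isAffineContraction_momentCurve_rescale n h₀ h₁ a x hK
  refine ⟨f, hf, ?_⟩
  have hφ : (fun t => α * (t - a) + x) = fun t => α * t + (x - α * a) := by
    funext t; ring
  rw [image_image, image_congr fun t _ => hfη t, ← image_image (momentCurve n), hφ,
    image_affine_Icc' h₀]
  congr 2 <;> ring

theorem exists_isAffineContraction_image_momentCurve_Icc_piece (n : ℕ) {c d : ℝ} (hcd : c ≤ d)
    {m : ℕ} (hm : ∀ x ∈ Icc c d, ‖momentShift n x‖ * ‖momentShift n (-c)‖ < m + 1)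
    (i : Fin (m + 1)) :
    ∃ f : EuclideanSpace ℝ (Fin n) → EuclideanSpace ℝ (Fin n), IsAffineContraction f ∧
      f '' (momentCurve n '' Icc c d) =
        momentCurve n '' Icc (c + i * ((d - c) / (m + 1))) (c + (i + 1) * ((d - c) / (m + 1))) := by
  set δ : ℝ := (d - c) / (m + 1)
  have hδ : 0 ≤ δ := div_nonneg (sub_nonneg.2 hcd) (by positivity)
  have hmδ : (m + 1) * δ = d - c := mul_div_cancel₀ _ (by positivity)
  have hi : (i : ℝ) + 1 ≤ m + 1 := by exact_mod_cast i.2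
  have hx : c + i * δ ∈ Icc c d :=
    ⟨le_add_of_nonneg_right (by positivity), by nlinarith⟩
  have hK : ‖momentShift n (c + i * δ)‖ * (1 / (m + 1)) * ‖momentShift n (-c)‖ < 1 := by
    rw [mul_one_div, div_mul_eq_mul_div, div_lt_one (by positivity)]
    exact hm _ hx
  obtain ⟨f, hf, himg⟩ := exists_isAffineContraction_image_momentCurve_Icc n (by positivity)
    (div_le_one_of_le₀ (by simp) (by positivity)) c d _ hK
  exact ⟨f, hf, by rw [himg]; congr 2; ring⟩

/-- For every `n ≥ 1` and all reals `c < d`, the image of the moment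
curve `η : [c,d] → ℝⁿ`, `η t = (t, t², …, tⁿ)`, is a non-trivial self-affine set. -/
theorem momentCurve_image_isSelfAffine
    (n : ℕ) (hn : 1 ≤ n) (c d : ℝ) (hcd : c < d) :
    IsSelfAffine (momentCurve n '' Icc c d) ∧ (momentCurve n '' Icc c d).Nontrivial := by
  obtain ⟨C, hC⟩ := isCompact_Icc.exists_bound_of_continuousOn
    (continuous_momentShift n).continuousOn (s := Icc c d)
  obtain ⟨m, hm⟩ := exists_nat_gt (C * ‖momentShift n (-c)‖)
  have hmC (x) (hx : x ∈ Icc c d) : ‖momentShift n x‖ * ‖momentShift n (-c)‖ < m + 1 :=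
    (mul_le_mul_of_nonneg_right (hC x hx) (norm_nonneg _)).trans_lt (by linarith)
  choose f hf himg using exists_isAffineContraction_image_momentCurve_Icc_piece n hcd.le hmC
  refine ⟨⟨(nonempty_Icc.2 hcd.le).image _, isCompact_Icc.image (continuous_momentCurve n),
    m + 1, f, hf, ?_⟩, ?_⟩
  · rw [iUnion_congr himg, ← image_iUnion,
      iUnion_Icc_add_mul _ _ (div_nonneg (sub_nonneg.2 hcd.le) (by positivity)),
      mul_div_cancel₀ _ (by positivity), add_sub_cancel]
  · refine ⟨_, mem_image_of_mem _ (left_mem_Icc.2 hcd.le), _,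
      mem_image_of_mem _ (right_mem_Icc.2 hcd.le), fun h => hcd.ne ?_⟩
    simpa [momentCurve] using congr($h ⟨0, hn⟩)
end

section
/- A circle in the plane contains no non-trivial self-affine set: if C ⊆ ℝ² is a circle (the set of points at a fixed positive distance r from a center point) and E ⊆ C is a self-affine set, then E is a singleton. -/
/-!
A finite set mapped injectively into itself by a strict contraction is a singleton: the farthest
pair of points would have a still farther pair of preimages.

If `E` is infinite, pick one map `f = T · + b` of the system. The function
`θ ↦ ‖f (z + r e^{iθ}) - z‖² - r²` is real analytic and vanishes at the infinitely many angles of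
points of `E`, hence everywhere: `f` maps the whole circle into itself. Antipodal points then
show that `f z - z` is orthogonal to the range of `T`, which is everything, so `f` fixes `z` and
`T` preserves the length of vectors of norm `r`, contradicting `‖T‖ < 1`.
-/

open Set

open Metric

open scoped RealInnerProductSpace

theorem Set.Finite.subsingleton_of_mapsTo_of_dist_lt {X : Type*} [MetricSpace X] {f : X → X}
    {E : Set X} (hE : E.Finite) (hmaps : MapsTo f E E) (hinj : InjOn f E)
    (hlt : ∀ x ∈ E, ∀ y ∈ E, x ≠ y → dist (f x) (f y) < dist x y) : E.Subsingleton := by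
  intro x hx y hy
  obtain ⟨⟨a, b⟩, ⟨ha, hb⟩, hmax⟩ :=
    Set.exists_max_image (E ×ˢ E) (fun q => dist q.1 q.2) (hE.prod hE) ⟨(x, y), hx, hy⟩
  have hsurj : SurjOn f E E := ((hE.injOn_iff_bijOn_of_mapsTo hmaps).mp hinj).surjOn
  obtain ⟨a', ha', rfl⟩ := hsurj ha
  obtain ⟨b', hb', rfl⟩ := hsurj hb
  by_cases hab : a' = b'
  · subst hab
    simpa using hmax (x, y) ⟨hx, hy⟩
  · exact absurd (hmax (a', b') ⟨ha', hb'⟩) (not_le.mpr (hlt a' ha' b' hb' hab))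

theorem AnalyticOnNhd.eq_zero_of_infinite_of_subset_isCompact {𝕜 F : Type*}
    [NontriviallyNormedField 𝕜] [PreconnectedSpace 𝕜] [NormedAddCommGroup F] [NormedSpace 𝕜 F]
    {g : 𝕜 → F} (hg : AnalyticOnNhd 𝕜 g univ) {S K : Set 𝕜} (hS : S.Infinite) (hK : IsCompact K)
    (hSK : S ⊆ K) (hgS : EqOn g 0 S) : g = 0 := by
  obtain ⟨θ, -, hθ⟩ := hS.exists_accPt_of_subset_isCompact hK hSK
  have hfreq : ∃ᶠ t in nhdsWithin θ {θ}ᶜ, g t = 0 :=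
    (accPt_iff_frequently_nhdsNE.mp hθ).mono hgS
  exact funext fun t => hg.eqOn_zero_of_preconnected_of_frequently_eq_zero isPreconnected_univ
    (mem_univ θ) hfreq (mem_univ t)

theorem analyticAt_norm_sq {V : Type*} [NormedAddCommGroup V] [InnerProductSpace ℝ V] (x : V) :
    AnalyticAt ℝ (fun y : V => ‖y‖ ^ 2) x := by
  convert ((innerSL ℝ (E := V)).analyticAt_bilinear (x, x)).comp₂ analyticAt_id analyticAt_id
    using 2 with y
  exact (real_inner_self_eq_norm_sq y).symm

theorem AnalyticOnNhd.mapsTo_sphere_of_infinite {V : Type*} [NormedAddCommGroup V]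
    [InnerProductSpace ℝ V] {F : EuclideanSpace ℝ (Fin 2) → V} (hF : AnalyticOnNhd ℝ F univ)
    {E : Set (EuclideanSpace ℝ (Fin 2))} {z : EuclideanSpace ℝ (Fin 2)} {r : ℝ} {z' : V} {r' : ℝ}
    (hE : E ⊆ sphere z r) (hinf : E.Infinite) (hFE : MapsTo F E (sphere z' r')) :
    MapsTo F (sphere z r) (sphere z' r') := by
  have hr : 0 ≤ r := NormedSpace.sphere_nonempty.mp (hinf.nonempty.mono hE)
  let e := Complex.orthonormalBasisOneI.repr
  let p : ℝ → EuclideanSpace ℝ (Fin 2) := fun θ => z + e (circleMap 0 r θ)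
  have hp : sphere z r ⊆ p '' Icc 0 (2 * Real.pi) := by
    intro x hx
    have : e.symm (x - z) ∈ sphere (0 : ℂ) |r| := by
      simpa [abs_of_nonneg hr, ← dist_eq_norm] using hx
    rw [← image_circleMap_Ioc] at this
    obtain ⟨θ, hθ, hθx⟩ := this
    exact ⟨θ, Ioc_subset_Icc_self hθ, by simp [p, hθx]⟩
  let g : ℝ → ℝ := fun θ => ‖F (p θ) - z'‖ ^ 2 - r' ^ 2
  have hg : AnalyticOnNhd ℝ g univ := fun θ _ => by
    have hpθ : AnalyticAt ℝ p θ :=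
      analyticAt_const.add ((e.toContinuousLinearEquiv.toContinuousLinearMap.analyticAt _).comp
        (analyticOnNhd_circleMap 0 r θ trivial))
    exact ((analyticAt_norm_sq _).comp (((hF _ trivial).comp hpθ).sub analyticAt_const)).sub
      analyticAt_const
  have hS : (p ⁻¹' E ∩ Icc 0 (2 * Real.pi)).Infinite := fun hfin =>
    hinf ((hfin.image p).subset fun x hx => by
      obtain ⟨θ, hθ, rfl⟩ := hp (hE hx)
      exact ⟨θ, ⟨hx, hθ⟩, rfl⟩)
  have hg0 := hg.eq_zero_of_infinite_of_subset_isCompact hS isCompact_Icc inter_subset_right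
    fun θ hθ => by simp [g, mem_sphere_iff_norm.mp (hFE hθ.1)]
  intro x hx
  obtain ⟨θ, -, rfl⟩ := hp hx
  have hθ : ‖F (p θ) - z'‖ ^ 2 = r' ^ 2 := sub_eq_zero.mp (congrFun hg0 θ)
  obtain ⟨y, hy⟩ := hinf.nonempty
  rw [mem_sphere_iff_norm, ← sq_eq_sq₀ (norm_nonneg _) (nonneg_of_mem_sphere (hFE hy)), hθ]

theorem one_le_opNorm_of_mapsTo_sphere {V : Type*} [NormedAddCommGroup V] [InnerProductSpace ℝ V]
    [Nontrivial V] {T : V →L[ℝ] V} (hT : Function.Surjective T) {f : V → V} {b : V}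
    (hf : ∀ x, f x = T x + b) {z : V} {r : ℝ} (hr : 0 < r)
    (hmaps : MapsTo f (sphere z r) (sphere z r)) : 1 ≤ ‖T‖ := by
  set w := T z + b - z with hw
  have hnorm : ∀ v, ‖v‖ = r → ‖w + T v‖ = r := fun v hv => by
    have := hmaps (show z + v ∈ sphere z r by simpa using hv)
    rwa [mem_sphere_iff_norm, hf, map_add, show T z + T v + b - z = w + T v by rw [hw]; abel]
      at this
  -- the images of the antipodal points `z ± u` are equidistant from `z`
  have horth : ∀ v, ⟪w, T v⟫ = 0 := by
    intro v
    rcases eq_or_ne v 0 with rfl | hv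
    · simp
    have hu : ‖(r / ‖v‖) • v‖ = r := by simp [norm_smul, abs_of_pos hr, hv]
    have hplus := hnorm _ hu
    have hminus := hnorm _ ((norm_neg _).trans hu)
    rw [map_neg, ← sub_eq_add_neg] at hminus
    have hsq := congrArg (· ^ 2) (hplus.trans hminus.symm)
    simp only [norm_add_sq_real, norm_sub_sq_real] at hsq
    have hzero : ⟪w, T ((r / ‖v‖) • v)⟫ = 0 := by linarith
    rw [map_smul, real_inner_smul_right] at hzero
    exact (mul_eq_zero.mp hzero).resolve_left (by positivity)
  have hw0 : w = 0 := by
    obtain ⟨v, hv⟩ := hT w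
    exact inner_self_eq_zero.mp (hv ▸ horth v)
  obtain ⟨u, hu⟩ := exists_norm_eq V hr.le
  have hTu : ‖T u‖ = r := by simpa [hw0] using hnorm u hu
  have hle := T.le_opNorm u
  rw [hTu, hu] at hle
  exact (le_mul_iff_one_le_left hr).mp hle

namespace IsAffineContraction

variable {n : ℕ} {f : EuclideanSpace ℝ (Fin n) → EuclideanSpace ℝ (Fin n)}

theorem injective (hf : IsAffineContraction f) : Function.Injective f := by
  obtain ⟨T, b, hT, -, hfT⟩ := hf
  intro x y h
  rw [hfT, hfT, add_left_inj] at h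
  exact hT.1 h

theorem dist_lt (hf : IsAffineContraction f) {x y : EuclideanSpace ℝ (Fin n)} (hxy : x ≠ y) :
    dist (f x) (f y) < dist x y := by
  obtain ⟨T, b, -, hT, hfT⟩ := hf
  rw [hfT, hfT, dist_add_right, dist_eq_norm, dist_eq_norm, ← map_sub]
  calc ‖T (x - y)‖ ≤ ‖T‖ * ‖x - y‖ := T.le_opNorm _
    _ < ‖x - y‖ := mul_lt_of_lt_one_left (norm_pos_iff.mpr (sub_ne_zero.mpr hxy)) hT

theorem analyticOnNhd (hf : IsAffineContraction f) : AnalyticOnNhd ℝ f univ := by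
  obtain ⟨T, b, -, -, hfT⟩ := hf
  rw [funext hfT]
  exact fun x _ => (T.analyticAt x).add analyticAt_const

end IsAffineContraction

/-- A circle in the plane contains no non-trivial self-affine set:
if `C ⊆ ℝ²` is the set of points at a fixed positive distance `r` from a center `z`,
and `E ⊆ C` is a self-affine set, then `E` is a singleton. -/
theorem circle_no_nontrivial_selfAffine
    (z : EuclideanSpace ℝ (Fin 2)) (r : ℝ) (hr : 0 < r)
    (E : Set (EuclideanSpace ℝ (Fin 2)))
    (hE : E ⊆ Metric.sphere z r) (hSA : IsSelfAffine E) :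
    ∃ x, E = {x} := by
  obtain ⟨hne, -, _, f, hf, hE_eq⟩ := hSA
  obtain ⟨i, -⟩ := mem_iUnion.mp (hE_eq.subset hne.some_mem)
  have hmaps : MapsTo (f i) E E := fun x hx =>
    hE_eq.superset (mem_iUnion_of_mem i (mem_image_of_mem _ hx))
  refine exists_eq_singleton_iff_nonempty_subsingleton.mpr ⟨hne, ?_⟩
  rcases E.finite_or_infinite with hfin | hinf
  · exact hfin.subsingleton_of_mapsTo_of_dist_lt hmaps (hf i).injective.injOn
      fun x _ y _ => (hf i).dist_lt
  · obtain ⟨T, b, hT, hTnorm, hfT⟩ := hf i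
    have hsphere :=
      (hf i).analyticOnNhd.mapsTo_sphere_of_infinite hE hinf (hmaps.mono_right hE)
    exact absurd (one_le_opNorm_of_mapsTo_sphere hT.2 hfT hr hsphere) hTnorm.not_ge
end

section
/- A compact algebraic surface contains no non-trivial self-affine set: if P: ℝⁿ → ℝ is a non-constant polynomial with real coefficients such that S(P) = {x ∈ ℝⁿ : P(x) = 0} is compact, and E ⊆ S(P) is a self-affine set, then E is a singleton. -/
open Set

open MvPolynomial

lemma totalDegree_aeval_le_one {n : ℕ} (g : Fin n → MvPolynomial (Fin n) ℝ)
    (hg : ∀ i, (g i).totalDegree ≤ 1) (Q : MvPolynomial (Fin n) ℝ) :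
    (aeval g Q).totalDegree ≤ Q.totalDegree := by
  rw [aeval_def, eval₂_eq]
  refine (totalDegree_finset_sum _ _).trans (Finset.sup_le fun s hs => ?_)
  refine le_trans (totalDegree_mul _ _) ?_
  have h1 : (algebraMap ℝ (MvPolynomial (Fin n) ℝ) (coeff s Q)).totalDegree = 0 := by
    rw [MvPolynomial.algebraMap_eq, totalDegree_C]
  rw [h1, zero_add]
  refine le_trans (totalDegree_finset_prod _ _) ?_
  refine le_trans (Finset.sum_le_sum (fun i _ => le_trans (totalDegree_pow _ _)
    (Nat.mul_le_mul_left _ (hg i)))) ?_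
  simp only [mul_one]
  exact le_totalDegree hs

lemma eval_aeval_aux {n : ℕ} (g : Fin n → MvPolynomial (Fin n) ℝ)
    (Q : MvPolynomial (Fin n) ℝ) (x : Fin n → ℝ) :
    eval x (aeval g Q) = eval (fun i => eval x (g i)) Q := by
  rw [← bind₁, eval, eval₂Hom_bind₁]
  rfl

/-- A compact algebraic surface contains no non-trivial self-affine
set: if `P : ℝⁿ → ℝ` is a non-constant polynomial such that
`S(P) = {x ∈ ℝⁿ : P x = 0}` is compact, and `E ⊆ S(P)` is a self-affine set, then
`E` is a singleton. -/
theorem compact_algebraic_surface_no_nontrivial_selfAffine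
    {n : ℕ} (P : MvPolynomial (Fin n) ℝ) (hP : P.totalDegree ≠ 0)
    (hcompact : IsCompact {x : EuclideanSpace ℝ (Fin n) |
      MvPolynomial.eval (fun i => x i) P = 0})
    (E : Set (EuclideanSpace ℝ (Fin n)))
    (hE : E ⊆ {x : EuclideanSpace ℝ (Fin n) | MvPolynomial.eval (fun i => x i) P = 0})
    (hSA : IsSelfAffine E) :
    ∃ x, E = {x} := by
  classical
  obtain ⟨hne, hEcomp, ℓ, f, hcontr, hEeq⟩ := hSA
  -- reduce to the case of two distinct points
  by_cases htwo : ∃ x y, x ∈ E ∧ y ∈ E ∧ x ≠ y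
  swap
  · obtain ⟨x, hx⟩ := hne
    refine ⟨x, Set.eq_singleton_iff_unique_mem.mpr ⟨hx, fun y hy => ?_⟩⟩
    by_contra h
    exact htwo ⟨y, x, hy, hx, h⟩
  exfalso
  obtain ⟨x, y, hxE, hyE, hxy⟩ := htwo
  -- pick one of the contractions
  have hiex : ∃ i : Fin ℓ, x ∈ f i '' E := by
    have := hEeq ▸ hxE
    exact Set.mem_iUnion.mp this
  obtain ⟨i, -⟩ := hiex
  obtain ⟨T, b, hTbij, hTnorm, hfx⟩ := hcontr i
  set F := f i with hF
  have hFE : ∀ z ∈ E, F z ∈ E := by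
    intro z hz
    rw [hEeq]
    exact Set.mem_iUnion.mpr ⟨i, ⟨z, hz, rfl⟩⟩
  have hFsurj : Function.Surjective F := by
    intro w
    obtain ⟨u, hu⟩ := hTbij.2 (w - b)
    exact ⟨u, by rw [hfx, hu]; abel⟩
  -- coordinate formula for T
  have hsingle : ∀ (v : EuclideanSpace ℝ (Fin n)),
      v = ∑ k, v k • EuclideanSpace.single k (1:ℝ) := by
    intro v
    ext j
    have : (∑ k, v k • EuclideanSpace.single k (1:ℝ)) j
        = EuclideanSpace.proj j (∑ k, v k • EuclideanSpace.single k (1:ℝ)) := rfl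
    rw [this, map_sum]
    simp [EuclideanSpace.single_apply]
  have hT : ∀ (v : EuclideanSpace ℝ (Fin n)) (j : Fin n),
      T v j = ∑ k, v k * T (EuclideanSpace.single k (1:ℝ)) j := by
    intro v j
    have h1 : T v = ∑ k, v k • T (EuclideanSpace.single k (1:ℝ)) := by
      conv_lhs => rw [hsingle v]
      rw [map_sum]
      simp
    rw [h1]
    have h2 : (∑ k, v k • T (EuclideanSpace.single k (1:ℝ))) j
        = EuclideanSpace.proj j (∑ k, v k • T (EuclideanSpace.single k (1:ℝ))) := rfl
    rw [h2, map_sum]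
    simp
  -- polynomial representation of F
  set g : Fin n → MvPolynomial (Fin n) ℝ :=
    fun j => C (b j) + ∑ k, C (T (EuclideanSpace.single k (1:ℝ)) j) * X k with hg
  have hgdeg : ∀ j, (g j).totalDegree ≤ 1 := by
    intro j
    refine le_trans (totalDegree_add _ _) (max_le (by simp [totalDegree_C]) ?_)
    refine le_trans (totalDegree_finset_sum _ _) (Finset.sup_le fun k _ => ?_)
    refine le_trans (totalDegree_mul _ _) ?_
    simp [totalDegree_C, totalDegree_X]
  have hgeval : ∀ (v : EuclideanSpace ℝ (Fin n)) (j : Fin n),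
      eval (fun k => v k) (g j) = F v j := by
    intro v j
    rw [hfx]
    have : (T v + b) j = T v j + b j := rfl
    rw [this, hT v j, hg]
    simp [add_comm]
    exact Finset.sum_congr rfl fun k _ => mul_comm _ _
  -- key: evaluating substituted polynomials
  have hkey : ∀ (Q : MvPolynomial (Fin n) ℝ) (v : EuclideanSpace ℝ (Fin n)),
      eval (fun k => v k) (aeval g Q) = eval (fun k => (F v) k) Q := by
    intro Q v
    rw [eval_aeval_aux]
    have : (fun i => eval (fun k => v k) (g i)) = fun k => (F v) k :=
      funext fun j => hgeval v j
    rw [this]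
  -- the space of polynomials of degree ≤ deg P vanishing on E
  set d := P.totalDegree with hd
  set W : Submodule ℝ (MvPolynomial (Fin n) ℝ) :=
    { carrier := {Q | Q.totalDegree ≤ d ∧ ∀ z ∈ E, eval (fun k => z k) Q = 0}
      add_mem' := fun ha hb => ⟨le_trans (totalDegree_add _ _) (max_le ha.1 hb.1),
        fun z hz => by rw [map_add, ha.2 z hz, hb.2 z hz, add_zero]⟩
      zero_mem' := ⟨by simp, fun z hz => by simp⟩
      smul_mem' := fun c Q hQ => ⟨le_trans (totalDegree_smul_le c Q) hQ.1,
        fun z hz => by rw [smul_eval, hQ.2 z hz, mul_zero]⟩ } with hW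
  have hWmem : ∀ Q : MvPolynomial (Fin n) ℝ,
      Q ∈ W ↔ Q.totalDegree ≤ d ∧ ∀ z ∈ E, eval (fun k => z k) Q = 0 := fun _ => Iff.rfl
  have hWle : W ≤ restrictTotalDegree (Fin n) ℝ d := by
    intro Q hQ
    rw [mem_restrictTotalDegree]
    exact ((hWmem Q).mp hQ).1
  have : FiniteDimensional ℝ (restrictTotalDegree (Fin n) ℝ d) := by infer_instance
  have hWfin : FiniteDimensional ℝ W := Submodule.finiteDimensional_of_le hWle
  -- the substitution operator preserves W
  set Φ : MvPolynomial (Fin n) ℝ →ₗ[ℝ] MvPolynomial (Fin n) ℝ :=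
    (aeval g).toLinearMap with hΦ
  have hΦapply : ∀ Q, Φ Q = aeval g Q := fun _ => rfl
  have hΦW : ∀ Q ∈ W, Φ Q ∈ W := by
    intro Q hQ
    obtain ⟨h1, h2⟩ := (hWmem Q).mp hQ
    refine (hWmem _).mpr ⟨le_trans (totalDegree_aeval_le_one g hgdeg Q) h1, fun z hz => ?_⟩
    rw [hΦapply, hkey Q z]
    exact h2 (F z) (hFE z hz)
  set Φ' : W →ₗ[ℝ] W := Φ.restrict hΦW with hΦ'
  -- injectivity
  have hΦinj : Function.Injective Φ := by
    intro Q Q' h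
    apply MvPolynomial.funext
    intro v
    obtain ⟨u, hu⟩ := hFsurj ((WithLp.equiv 2 (Fin n → ℝ)).symm v)
    have h' : aeval g Q = aeval g Q' := h
    have h1 := hkey Q u
    have h2 := hkey Q' u
    rw [h'] at h1
    have hv : (fun k => (F u) k) = v := by rw [hu]; rfl
    rw [hv] at h1 h2
    rw [← h1]
    exact h2
  have hΦ'inj : Function.Injective Φ' := by
    intro Q Q' h
    have : Φ Q.1 = Φ Q'.1 := congrArg Subtype.val h
    exact Subtype.ext (hΦinj this)
  have hΦ'surj : Function.Surjective Φ' :=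
    (LinearMap.injective_iff_surjective).mp hΦ'inj
  -- P itself lies in W
  have hPW : P ∈ W := (hWmem P).mpr ⟨le_rfl, fun z hz => hE hz⟩
  -- pull back P by iterates of Φ'
  have hiter : ∀ k : ℕ, ∃ R ∈ W, ∀ v : EuclideanSpace ℝ (Fin n),
      eval (fun j => v j) P = eval (fun j => (F^[k] v) j) R := by
    intro k
    induction k with
    | zero => exact ⟨P, hPW, fun v => rfl⟩
    | succ k ih =>
      obtain ⟨R, hR, hRe⟩ := ih
      obtain ⟨R', hR'⟩ := hΦ'surj ⟨R, hR⟩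
      refine ⟨R'.1, R'.2, fun v => ?_⟩
      have hRR' : aeval g R'.1 = R := by
        have := congrArg Subtype.val hR'
        exact this
      rw [hRe v, ← hRR', hkey R'.1 (F^[k] v), ← Function.iterate_succ_apply' F k v]
  -- boundedness of the zero set
  obtain ⟨r, hr⟩ := hcompact.isBounded.subset_closedBall 0
  have hrpos : 0 ≤ r := by
    have := hr (hE hxE)
    simpa using le_trans dist_nonneg this
  -- Lipschitz bound for iterates
  have hTnn : (0:ℝ) ≤ ‖T‖ := ContinuousLinearMap.opNorm_nonneg T
  have hlip : ∀ (a b' : EuclideanSpace ℝ (Fin n)), dist (F a) (F b') ≤ ‖T‖ * dist a b' := by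
    intro a b'
    rw [dist_eq_norm, dist_eq_norm, hfx, hfx]
    have : T a + b - (T b' + b) = T (a - b') := by rw [map_sub]; abel
    rw [this]
    exact T.le_opNorm _
  have hlipk : ∀ (k : ℕ) (a b' : EuclideanSpace ℝ (Fin n)),
      dist (F^[k] a) (F^[k] b') ≤ ‖T‖ ^ k * dist a b' := by
    intro k
    induction k with
    | zero =>
      intro a b'
      rw [Function.iterate_zero_apply, Function.iterate_zero_apply, pow_zero, one_mul]
    | succ k ih =>
      intro a b'
      rw [Function.iterate_succ_apply' F k a, Function.iterate_succ_apply' F k b']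
      calc dist (F (F^[k] a)) (F (F^[k] b')) ≤ ‖T‖ * dist (F^[k] a) (F^[k] b') := hlip _ _
        _ ≤ ‖T‖ * (‖T‖ ^ k * dist a b') := by
            exact mul_le_mul_of_nonneg_left (ih a b') hTnn
        _ = ‖T‖ ^ (k + 1) * dist a b' := by ring
  -- choose k large
  have hdxy : 0 < dist x y := dist_pos.mpr hxy
  have htend : Filter.Tendsto (fun k : ℕ => ‖T‖ ^ k * (2 * r + 1)) Filter.atTop (nhds 0) := by
    have h0 : Filter.Tendsto (fun k : ℕ => ‖T‖ ^ k) Filter.atTop (nhds 0) :=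
      tendsto_pow_atTop_nhds_zero_of_lt_one hTnn hTnorm
    have h1 := h0.mul_const (2 * r + 1)
    rwa [zero_mul] at h1
  obtain ⟨k, hk⟩ := (htend.eventually (gt_mem_nhds hdxy)).exists
  -- pull back x and y
  obtain ⟨R, hR, hRe⟩ := hiter k
  obtain ⟨u, hu⟩ := (hFsurj.iterate k) x
  obtain ⟨v, hv⟩ := (hFsurj.iterate k) y
  have hu0 : eval (fun j => u j) P = 0 := by
    rw [hRe u, hu]
    exact ((hWmem R).mp hR).2 x hxE
  have hv0 : eval (fun j => v j) P = 0 := by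
    rw [hRe v, hv]
    exact ((hWmem R).mp hR).2 y hyE
  have hub : dist u (0 : EuclideanSpace ℝ (Fin n)) ≤ r := hr hu0
  have hvb : dist v (0 : EuclideanSpace ℝ (Fin n)) ≤ r := hr hv0
  have hduv : dist u v ≤ 2 * r + 1 := by
    calc dist u v ≤ dist u 0 + dist 0 v := dist_triangle _ _ _
      _ ≤ r + r := add_le_add hub (by rwa [dist_comm])
      _ ≤ 2 * r + 1 := by linarith
  have : dist x y ≤ ‖T‖ ^ k * (2 * r + 1) := by
    calc dist x y = dist (F^[k] u) (F^[k] v) := by rw [hu, hv]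
      _ ≤ ‖T‖ ^ k * dist u v := hlipk k u v
      _ ≤ ‖T‖ ^ k * (2 * r + 1) := by
          exact mul_le_mul_of_nonneg_left hduv (pow_nonneg hTnn k)
  linarith
end

section
/- Let P: ℝⁿ → ℝ be a non-constant polynomial with real coefficients and let f: ℝⁿ → ℝⁿ be a strictly contractive invertible affine map with fixed point z. Suppose z ∈ S(P) and there exists x ∈ ℝⁿ whose forward orbit {fⁿ(x) : n ∈ ℕ} is contained in S(P) and is not eventually periodic (the orbit is an infinite set). Then S(P) is unbounded. -/
open Set

/-!
Let `p` be the polynomial function `P` and `Z` the set of points whose whole forward orbit under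
`f` lies in `S(P)`. Composition with the affine map `f` does not raise degrees, so the functions
`p ∘ f^[j]` span a finite-dimensional space `V`; composition with `f` is injective since `f` is
onto, hence maps `V` onto itself, so `p` is a combination of the `p ∘ f^[j + 1]`. Thus a point
whose image lies in `Z` lies in `Z` itself, i.e. `Z ⊆ f '' Z`. A `K`-Lipschitz map with `K < 1`
shrinks diameters by `K^k` after `k` steps, so a bounded set with `Z ⊆ f^[k] '' Z` for all `k`
has at most one point; but `Z ⊆ S(P)` contains the infinite orbit of `x`.
-/

open Function Submodule MvPolynomial Filter Topology

theorem Module.End.mem_span_range_iterate_succ_of_injective {K M : Type*} [DivisionRing K]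
    [AddCommGroup M] [Module K M] (φ : Module.End K M) (hφ : Function.Injective φ) (p : M)
    [FiniteDimensional K (span K (range fun j : ℕ => φ^[j] p))] :
    p ∈ span K (range fun j : ℕ => φ^[j + 1] p) := by
  set V := span K (range fun j : ℕ => φ^[j] p)
  have hmap : V.map φ = span K (range fun j : ℕ => φ^[j + 1] p) := by
    rw [map_span, ← range_comp]
    congr with j
    exact (iterate_succ_apply' φ j p).symm
  have hle : V.map φ ≤ V := hmap ▸ span_mono (range_subset_iff.2 fun j => ⟨j + 1, rfl⟩)
  have hfinrank : Module.finrank K (V.map φ) = Module.finrank K V :=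
    (equivMapOfInjective φ hφ V).finrank_eq.symm
  rw [← hmap, eq_of_le_of_finrank_eq hle hfinrank]
  exact subset_span ⟨0, rfl⟩

theorem LipschitzWith.not_isBounded_of_subset_image {X : Type*} [MetricSpace X]
    {f : X → X} {K : NNReal} (hf : LipschitzWith K f) (hK : K < 1) {Z : Set X}
    (hZ : Z ⊆ f '' Z) (hZ_nontrivial : Z.Nontrivial) : ¬ Bornology.IsBounded Z := by
  intro hbd
  obtain ⟨a, ha, b, hb, hab⟩ := hZ_nontrivial
  have hiter : ∀ k, Z ⊆ f^[k] '' Z := by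
    intro k
    induction k with
    | zero => simp
    | succ k ih =>
      rw [iterate_succ', image_comp]
      exact hZ.trans (image_mono ih)
  have hdist : ∀ k : ℕ, dist a b ≤ (K : ℝ) ^ k * Metric.diam Z := fun k =>
    calc dist a b ≤ Metric.diam (f^[k] '' Z) :=
          Metric.dist_le_diam_of_mem ((hf.iterate k).isBounded_image hbd) (hiter k ha) (hiter k hb)
      _ ≤ (K : ℝ) ^ k * Metric.diam Z := by simpa using (hf.iterate k).diam_image_le Z hbd
  have hlim : Tendsto (fun k : ℕ => (K : ℝ) ^ k * Metric.diam Z) atTop (𝓝 0) := by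
    simpa using (tendsto_pow_atTop_nhds_zero_of_lt_one K.2 hK).mul_const (Metric.diam Z)
  exact (dist_pos.2 hab).not_ge (ge_of_tendsto' hlim hdist)

theorem MvPolynomial.totalDegree_bind₁_le {σ τ R : Type*} [CommSemiring R]
    {g : σ → MvPolynomial τ R} (hg : ∀ i, (g i).totalDegree ≤ 1) (Q : MvPolynomial σ R) :
    (bind₁ g Q).totalDegree ≤ Q.totalDegree := by
  conv_lhs => rw [Q.as_sum, map_sum]
  refine totalDegree_finsetSum_le fun m hm => ?_
  rw [bind₁_monomial]
  refine (totalDegree_mul _ _).trans ?_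
  rw [totalDegree_C, zero_add]
  refine (totalDegree_finsetProd _ _).trans ?_
  calc ∑ i ∈ m.support, (g i ^ m i).totalDegree
      ≤ ∑ i ∈ m.support, m i := Finset.sum_le_sum fun i _ =>
        (totalDegree_pow _ _).trans (by simpa using Nat.mul_le_mul_left (m i) (hg i))
    _ ≤ Q.totalDegree := le_totalDegree hm

theorem EuclideanSpace.linearMap_apply_eq_sum {ι : Type*} [Fintype ι] [DecidableEq ι]
    (T : EuclideanSpace ℝ ι →ₗ[ℝ] EuclideanSpace ℝ ι) (y : EuclideanSpace ℝ ι) (i : ι) :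
    T y i = ∑ j, T (EuclideanSpace.single j 1) i * y j := by
  conv_lhs => rw [← (EuclideanSpace.basisFun ι ℝ).sum_repr y]
  simp [map_sum, mul_comm]

section PolynomialFunctions

variable {ι : Type*}

noncomputable def evalOnEuclidean : MvPolynomial ι ℝ →ₗ[ℝ] (EuclideanSpace ℝ ι → ℝ) :=
  LinearMap.pi fun y => (aeval fun i => y i).toLinearMap

theorem evalOnEuclidean_apply (Q : MvPolynomial ι ℝ) (y : EuclideanSpace ℝ ι) :
    evalOnEuclidean Q y = eval (fun i => y i) Q := by
  simp [evalOnEuclidean]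

variable (ι) in
noncomputable def polynomialFunctionsDegreeLE (d : ℕ) :
    Submodule ℝ (EuclideanSpace ℝ ι → ℝ) :=
  (restrictTotalDegree ι ℝ d).map evalOnEuclidean

instance [Finite ι] (d : ℕ) : FiniteDimensional ℝ (polynomialFunctionsDegreeLE ι d) := by
  unfold polynomialFunctionsDegreeLE; infer_instance

theorem comp_mem_polynomialFunctionsDegreeLE [Fintype ι] {d : ℕ} {q : EuclideanSpace ℝ ι → ℝ}
    (hq : q ∈ polynomialFunctionsDegreeLE ι d) {f : EuclideanSpace ℝ ι → EuclideanSpace ℝ ι}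
    {T : EuclideanSpace ℝ ι →ₗ[ℝ] EuclideanSpace ℝ ι} {b : EuclideanSpace ℝ ι}
    (hf : ∀ y, f y = T y + b) : q ∘ f ∈ polynomialFunctionsDegreeLE ι d := by
  classical
  obtain ⟨Q, hQ, rfl⟩ := hq
  let coord : ι → MvPolynomial ι ℝ := fun i =>
    C (b i) + ∑ j, C (T (EuclideanSpace.single j 1) i) * X j
  have hcoord_deg : ∀ i, (coord i).totalDegree ≤ 1 := fun i =>
    (totalDegree_add _ _).trans <| max_le (by simp) <| totalDegree_finsetSum_le fun j _ =>
      (totalDegree_mul _ _).trans (by simp)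
  rw [SetLike.mem_coe, mem_restrictTotalDegree] at hQ
  refine ⟨bind₁ coord Q, (mem_restrictTotalDegree _ _ _).2
    ((totalDegree_bind₁_le hcoord_deg Q).trans hQ), funext fun y => ?_⟩
  have hcoord : (fun i => eval (fun j => y j) (coord i)) = fun i => f y i := by
    funext i
    simp [coord, hf, EuclideanSpace.linearMap_apply_eq_sum T y i, add_comm]
  rw [comp_apply, evalOnEuclidean_apply, evalOnEuclidean_apply, ← hcoord]
  exact aeval_bind₁ _ _ _

end PolynomialFunctions

section OrbitZeroLocus

variable {X K : Type*} [DivisionRing K]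

theorem LinearMap.funLeft_iterate_apply (f : X → X) (g : X → K) (j : ℕ) :
    (LinearMap.funLeft K K f)^[j] g = g ∘ f^[j] := by
  induction j with
  | zero => rfl
  | succ j ih => rw [iterate_succ_apply', ih, iterate_succ]; rfl

theorem apply_eq_zero_of_forall_apply_iterate_succ_eq_zero {f : X → X} (hf : Surjective f)
    (p : X → K) [FiniteDimensional K (span K (range fun j : ℕ => p ∘ f^[j]))] {v : X}
    (hv : ∀ j, p (f^[j + 1] v) = 0) : p v = 0 := by
  set φ := LinearMap.funLeft K K f
  have hφ : (fun j : ℕ => φ^[j] p) = fun j => p ∘ f^[j] :=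
    funext (LinearMap.funLeft_iterate_apply f p)
  have : FiniteDimensional K (span K (range fun j : ℕ => φ^[j] p)) := by rwa [hφ]
  have hp := Module.End.mem_span_range_iterate_succ_of_injective φ
    (LinearMap.funLeft_injective_of_surjective _ _ f hf) p
  have hker : span K (range fun j : ℕ => φ^[j + 1] p) ≤ LinearMap.ker (LinearMap.proj v) :=
    span_le.2 <| range_subset_iff.2 fun j => by
      rw [SetLike.mem_coe, LinearMap.mem_ker, congrFun hφ (j + 1)]
      exact hv j
  simpa using hker hp

def orbitZeroLocus (f : X → X) (p : X → K) : Set X := {v | ∀ j, p (f^[j] v) = 0}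

theorem orbitZeroLocus_subset_image {f : X → X} (hf : Surjective f) (p : X → K)
    [FiniteDimensional K (span K (range fun j : ℕ => p ∘ f^[j]))] :
    orbitZeroLocus f p ⊆ f '' orbitZeroLocus f p := by
  intro v hv
  obtain ⟨u, rfl⟩ := hf v
  refine ⟨u, fun j => ?_, rfl⟩
  cases j with
  | zero => exact apply_eq_zero_of_forall_apply_iterate_succ_eq_zero hf p fun j => hv j
  | succ j => rw [iterate_succ_apply]; exact hv j

end OrbitZeroLocus

theorem algebraic_surface_with_orbit_unbounded_general
    {n : ℕ} (P : MvPolynomial (Fin n) ℝ)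
    (f : EuclideanSpace ℝ (Fin n) → EuclideanSpace ℝ (Fin n))
    (hf : IsAffineContraction f)
    (x : EuclideanSpace ℝ (Fin n))
    (horbit : ∀ k : ℕ, MvPolynomial.eval (fun i => (f^[k] x) i) P = 0)
    (hinf : (Set.range fun k : ℕ => f^[k] x).Infinite) :
    ¬ Bornology.IsBounded {y : EuclideanSpace ℝ (Fin n) |
      MvPolynomial.eval (fun i => y i) P = 0} := by
  obtain ⟨T, b, hT, hT1, hfTb⟩ := hf
  set p : EuclideanSpace ℝ (Fin n) → ℝ := evalOnEuclidean P
  have hpoly : ∀ j, p ∘ f^[j] ∈ polynomialFunctionsDegreeLE (Fin n) P.totalDegree := by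
    intro j
    induction j with
    | zero => exact ⟨P, (mem_restrictTotalDegree _ _ _).2 le_rfl, rfl⟩
    | succ j ih =>
      rw [iterate_succ, ← comp_assoc]
      exact comp_mem_polynomialFunctionsDegreeLE ih hfTb
  have : FiniteDimensional ℝ (span ℝ (range fun j => p ∘ f^[j])) :=
    Submodule.finiteDimensional_of_le (span_le.2 (range_subset_iff.2 hpoly))
  have hsurj : Surjective f := fun y =>
    let ⟨u, hu⟩ := hT.2 (y - b)
    ⟨u, by rw [hfTb, hu, sub_add_cancel]⟩
  have hlip : LipschitzWith ‖T‖₊ f := LipschitzWith.of_dist_le_mul fun u v => by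
    rw [hfTb, hfTb, dist_add_right]
    exact T.lipschitz.dist_le_mul u v
  have horbit_mem : ∀ k, f^[k] x ∈ orbitZeroLocus f p := fun k j => by
    simpa [p, evalOnEuclidean_apply, ← iterate_add_apply] using horbit (j + k)
  intro hbd
  refine hlip.not_isBounded_of_subset_image hT1 (orbitZeroLocus_subset_image hsurj p)
    (hinf.nontrivial.mono (range_subset_iff.2 horbit_mem)) (hbd.subset fun v hv => ?_)
  simpa [p, evalOnEuclidean_apply] using hv 0

/-- Let `P : ℝⁿ → ℝ` be a non-constant polynomial and let
`f : ℝⁿ → ℝⁿ` be a strictly contractive invertible affine map with fixed point `z`.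
Suppose `z ∈ S(P)` and there exists `x ∈ ℝⁿ` whose forward orbit `{fᵏ x : k ∈ ℕ}` is
contained in `S(P)` and is an infinite set.  Then `S(P)` is unbounded. -/
theorem algebraic_surface_with_orbit_unbounded
    {n : ℕ} (P : MvPolynomial (Fin n) ℝ) (hP : P.totalDegree ≠ 0)
    (f : EuclideanSpace ℝ (Fin n) → EuclideanSpace ℝ (Fin n))
    (hf : IsAffineContraction f)
    (z : EuclideanSpace ℝ (Fin n)) (hz : f z = z)
    (hzS : MvPolynomial.eval (fun i => z i) P = 0)
    (x : EuclideanSpace ℝ (Fin n))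
    (horbit : ∀ k : ℕ, MvPolynomial.eval (fun i => (f^[k] x) i) P = 0)
    (hinf : (Set.range fun k : ℕ => f^[k] x).Infinite) :
    ¬ Bornology.IsBounded {y : EuclideanSpace ℝ (Fin n) |
      MvPolynomial.eval (fun i => y i) P = 0} :=
  algebraic_surface_with_orbit_unbounded_general P f hf x horbit hinf
end

section
/- If P: ℝⁿ → ℝ is a self-affine polynomial, then the algebraic surface S(P) = {x ∈ ℝⁿ : P(x) = 0} contains a non-trivial self-affine set. -/
open Set

/-- A strictly contractive invertible affine map `f` is a scaling factor for the
polynomial `P` if `P ∘ f = C • P` for some constant `C ∈ ℝ`. -/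
def IsScalingFactor {n : ℕ}
    (f : EuclideanSpace ℝ (Fin n) → EuclideanSpace ℝ (Fin n))
    (P : MvPolynomial (Fin n) ℝ) : Prop :=
  IsAffineContraction f ∧ ∃ C : ℝ, ∀ x : EuclideanSpace ℝ (Fin n),
    MvPolynomial.eval (fun i => (f x) i) P = C * MvPolynomial.eval (fun i => x i) P

/-!
The zero set `S(P)` is closed and, since `P ∘ f = C • P`, mapped into itself by every scaling
factor. A fixed point `z` of a scaling factor `f` lies on `S(P)`: `P z = C * P z` forces `P z = 0`
unless `C = 1`, and if `C = 1` then `P` is constant along the iterates of `f`, which converge to `z`,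
so `P` would be constant. Hence the orbit of `{zf, zg}` under the semigroup generated by `f` and `g`
lies in `S(P)`; it is bounded because `f` and `g` are contractions, so its closure `E` is compact,
and `E = f '' E ∪ g '' E` because each of `zf`, `zg` is fixed by one of the two maps.
-/

open Function Metric
open scoped NNReal

variable {α ι : Type*}

inductive ForwardOrbit (f : ι → α → α) (s : Set α) : α → Prop
  | of_mem {x : α} : x ∈ s → ForwardOrbit f s x
  | apply (i : ι) {x : α} : ForwardOrbit f s x → ForwardOrbit f s (f i x)

namespace ForwardOrbit

variable {f : ι → α → α} {s : Set α}

theorem setOf_subset {t : Set α} (hst : s ⊆ t) (ht : ∀ i, MapsTo (f i) t t) :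
    {x | ForwardOrbit f s x} ⊆ t := by
  intro x hx
  induction hx with
  | of_mem hx => exact hst hx
  | apply i _ ih => exact ht i ih

theorem setOf_eq_iUnion_image (hs : ∀ x ∈ s, ∃ i, f i x = x) :
    {x | ForwardOrbit f s x} = ⋃ i, f i '' {x | ForwardOrbit f s x} := by
  refine Subset.antisymm (fun x hx => ?_) (iUnion_subset fun i => ?_)
  · cases hx with
    | of_mem hx =>
      obtain ⟨i, hi⟩ := hs x hx
      exact mem_iUnion.2 ⟨i, x, of_mem hx, hi⟩
    | apply i hx => exact mem_iUnion.2 ⟨i, _, hx, rfl⟩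
  · rintro _ ⟨x, hx, rfl⟩
    exact apply i hx

end ForwardOrbit

theorem closure_eq_iUnion_image_closure [TopologicalSpace α] [T2Space α] [Finite ι]
    {f : ι → α → α} {S : Set α} (hf : ∀ i, Continuous (f i)) (hS : IsCompact (closure S))
    (h : S = ⋃ i, f i '' S) : closure S = ⋃ i, f i '' closure S := by
  conv_lhs => rw [h]
  rw [closure_iUnion_of_finite]
  exact iUnion_congr fun i => (image_closure_of_isCompact hS (hf i).continuousOn).symm

theorem exists_closedBall_mapsTo_of_contractingWith [MetricSpace α] [Finite ι]
    {f : ι → α → α} {K : ι → ℝ≥0} (hf : ∀ i, ContractingWith (K i) (f i)) (z : α) (r : ℝ) :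
    ∃ R ≥ r, ∀ i, MapsTo (f i) (closedBall z R) (closedBall z R) := by
  obtain ⟨M, hM⟩ := (finite_range fun i => dist (f i z) z / (1 - K i)).bddAbove
  refine ⟨max M r, le_max_right _ _, fun i x hx => ?_⟩
  have hdist : dist (f i z) z ≤ (1 - K i) * max M r := by
    rw [← div_le_iff₀' (hf i).one_sub_K_pos]
    exact (hM (mem_range_self i)).trans (le_max_left _ _)
  rw [mem_closedBall] at hx ⊢
  calc dist (f i x) z ≤ dist (f i x) (f i z) + dist (f i z) z := dist_triangle _ _ _
    _ ≤ K i * max M r + (1 - K i) * max M r := by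
      gcongr
      exact ((hf i).dist_le_mul x z).trans (by gcongr)
    _ = max M r := by ring

theorem ForwardOrbit.isBounded [MetricSpace α] [Finite ι] {f : ι → α → α} {K : ι → ℝ≥0}
    (hf : ∀ i, ContractingWith (K i) (f i)) {s : Set α} (hs : Bornology.IsBounded s) :
    Bornology.IsBounded {x | ForwardOrbit f s x} := by
  cases isEmpty_or_nonempty α
  · exact (toFinite _).isBounded
  obtain ⟨r, hsr⟩ := hs.subset_closedBall (Classical.arbitrary α)
  obtain ⟨R, hRr, hR⟩ := exists_closedBall_mapsTo_of_contractingWith hf _ r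
  exact isBounded_closedBall.subset <|
    ForwardOrbit.setOf_subset (hsr.trans (closedBall_subset_closedBall hRr)) hR

theorem ContractingWith.apply_eq_of_comp_eq [MetricSpace α] [CompleteSpace α] {β : Type*}
    [TopologicalSpace β] [T2Space β] {K : ℝ≥0} {f : α → α} (hf : ContractingWith K f)
    {φ : α → β} (hφ : Continuous φ) (hinv : φ ∘ f = φ) {z : α} (hz : IsFixedPt f z) (x : α) :
    φ x = φ z := by
  have : Nonempty α := ⟨z⟩
  have hiter : ∀ k, φ (f^[k] x) = φ x := fun k => by
    simpa using (Semiconj.iterate_right (f := φ) (ga := f) (gb := id) (congrFun hinv) k) x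
  have hlim := (hφ.tendsto _).comp (hf.tendsto_iterate_fixedPoint x)
  rw [← hf.fixedPoint_unique hz] at hlim
  exact tendsto_nhds_unique (by simp [comp_def, hiter]) hlim

theorem MvPolynomial.eq_C_of_forall_eval_eq {R σ : Type*} [CommRing R] [IsDomain R] [Infinite R]
    {P : MvPolynomial σ R} {c : R} (h : ∀ x, eval x P = c) : P = C c :=
  MvPolynomial.funext fun x => by simp [h]

variable {n : ℕ}

def algebraicSurface (P : MvPolynomial (Fin n) ℝ) : Set (EuclideanSpace ℝ (Fin n)) :=
  {x | MvPolynomial.eval (fun i => x i) P = 0}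

theorem continuous_eval_euclidean (P : MvPolynomial (Fin n) ℝ) :
    Continuous fun x : EuclideanSpace ℝ (Fin n) => MvPolynomial.eval (fun i => x i) P :=
  MvPolynomial.continuous_eval P |>.comp <| continuous_pi fun i => (EuclideanSpace.proj i).continuous

theorem isClosed_algebraicSurface (P : MvPolynomial (Fin n) ℝ) :
    IsClosed (algebraicSurface P) :=
  isClosed_eq (continuous_eval_euclidean P) continuous_const

theorem IsAffineContraction.exists_contractingWith
    {f : EuclideanSpace ℝ (Fin n) → EuclideanSpace ℝ (Fin n)} (hf : IsAffineContraction f) :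
    ∃ K, ContractingWith K f := by
  obtain ⟨T, b, -, hT, hfT⟩ := hf
  obtain rfl : f = fun x => T x + b := funext hfT
  exact ⟨‖T‖₊, hT, (isometry_add_right b).lipschitz.comp T.lipschitz |>.weaken (by simp)⟩

namespace IsScalingFactor

variable {P : MvPolynomial (Fin n) ℝ} {f : EuclideanSpace ℝ (Fin n) → EuclideanSpace ℝ (Fin n)}

theorem mapsTo_algebraicSurface (hf : IsScalingFactor f P) :
    MapsTo f (algebraicSurface P) (algebraicSurface P) := by
  obtain ⟨-, C, hC⟩ := hf
  intro x hx
  simp only [algebraicSurface, mem_ofPred_eq, hC x] at hx ⊢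
  rw [hx, mul_zero]

theorem mem_algebraicSurface_of_isFixedPt (hP : P.totalDegree ≠ 0) (hf : IsScalingFactor f P)
    {z : EuclideanSpace ℝ (Fin n)} (hz : IsFixedPt f z) : z ∈ algebraicSurface P := by
  obtain ⟨hfc, C, hC⟩ := hf
  have hz' := hC z
  rw [hz.eq] at hz'
  rcases eq_or_ne C 1 with rfl | hC1
  · obtain ⟨K, hK⟩ := hfc.exists_contractingWith
    have hconst := hK.apply_eq_of_comp_eq (continuous_eval_euclidean P)
      (funext fun x => by simpa using hC x) hz
    refine absurd ?_ hP
    rw [MvPolynomial.eq_C_of_forall_eval_eq (c := MvPolynomial.eval (fun i => z i) P)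
      fun y => hconst (WithLp.toLp 2 y), MvPolynomial.totalDegree_C]
  · exact (mul_eq_zero.1 (by linear_combination -hz' : (C - 1) * _ = 0)).resolve_left
      (sub_ne_zero.2 hC1)

end IsScalingFactor

/-- If `P : ℝⁿ → ℝ` is a self-affine polynomial (a non-constant
polynomial with two scaling factors whose fixed points are distinct), then the
algebraic surface `S(P) = {x ∈ ℝⁿ : P x = 0}` contains a non-trivial self-affine
set. -/
theorem selfAffine_polynomial_surface_contains_selfAffine
    {n : ℕ} (P : MvPolynomial (Fin n) ℝ) (hP : P.totalDegree ≠ 0)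
    (f g : EuclideanSpace ℝ (Fin n) → EuclideanSpace ℝ (Fin n))
    (hf : IsScalingFactor f P) (hg : IsScalingFactor g P)
    (zf zg : EuclideanSpace ℝ (Fin n))
    (hzf : f zf = zf) (hzg : g zg = zg) (hne : zf ≠ zg) :
    ∃ E : Set (EuclideanSpace ℝ (Fin n)),
      E ⊆ {x : EuclideanSpace ℝ (Fin n) | MvPolynomial.eval (fun i => x i) P = 0} ∧
      IsSelfAffine E ∧ E.Nontrivial := by
  set F := ![f, g]
  have hF : ∀ i, IsAffineContraction (F i) := Fin.forall_fin_two.2 ⟨hf.1, hg.1⟩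
  choose K hK using fun i => (hF i).exists_contractingWith
  set O := {x | ForwardOrbit F {zf, zg} x}
  have hzfO : zf ∈ closure O := subset_closure (.of_mem (.inl rfl))
  have hzgO : zg ∈ closure O := subset_closure (.of_mem (.inr rfl))
  have hO : IsCompact (closure O) :=
    (ForwardOrbit.isBounded hK (toFinite {zf, zg}).isBounded).isCompact_closure
  have hOS : O ⊆ algebraicSurface P :=
    ForwardOrbit.setOf_subset
      (pair_subset (hf.mem_algebraicSurface_of_isFixedPt hP hzf)
        (hg.mem_algebraicSurface_of_isFixedPt hP hzg))
      (Fin.forall_fin_two.2 ⟨hf.mapsTo_algebraicSurface, hg.mapsTo_algebraicSurface⟩)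
  have hOF : O = ⋃ i, F i '' O := ForwardOrbit.setOf_eq_iUnion_image <| by
    rintro x (rfl | rfl)
    exacts [⟨0, hzf⟩, ⟨1, hzg⟩]
  exact ⟨closure O, closure_minimal hOS (isClosed_algebraicSurface P),
    ⟨⟨zf, hzfO⟩, hO, 2, F, hF,
      closure_eq_iUnion_image_closure (fun i => (hK i).toLipschitzWith.continuous) hO hOF⟩,
    zf, hzfO, zg, hzgO, hne⟩
end

section
/- Let P: ℝⁿ → ℝ be a non-constant polynomial and let f: ℝⁿ → ℝⁿ be a strictly contractive invertible affine map that is a scaling factor for P, i.e., P ∘ f = C·P for some constant C ∈ ℝ. Then |C| < 1. -/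
open Set Filter MvPolynomial
open scoped NNReal

/-- Let `P : ℝⁿ → ℝ` be a non-constant polynomial and let
`f : ℝⁿ → ℝⁿ` be a strictly contractive invertible affine map with `P ∘ f = C • P`
for some constant `C ∈ ℝ`.  Then `|C| < 1`. -/
theorem scalingFactor_constant_lt_one
    {n : ℕ} (P : MvPolynomial (Fin n) ℝ) (hP : P.totalDegree ≠ 0)
    (f : EuclideanSpace ℝ (Fin n) → EuclideanSpace ℝ (Fin n))
    (hf : IsAffineContraction f) (C : ℝ)
    (hC : ∀ x : EuclideanSpace ℝ (Fin n),
      MvPolynomial.eval (fun i => (f x) i) P = C * MvPolynomial.eval (fun i => x i) P) :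
    |C| < 1 := by
  obtain ⟨T, b, hbij, hT, hfx⟩ := hf
  -- f is a contraction
  have hK : (‖T‖₊ : ℝ≥0) < 1 := by
    rwa [← NNReal.coe_lt_one, coe_nnnorm]
  have hlip : LipschitzWith ‖T‖₊ f := by
    apply LipschitzWith.of_dist_le_mul
    intro x y
    rw [hfx x, hfx y, dist_add_right, dist_eq_norm, dist_eq_norm, ← map_sub, coe_nnnorm]
    exact T.le_opNorm _
  have hcon : ContractingWith ‖T‖₊ f := ⟨hK, hlip⟩
  set x₀ := hcon.fixedPoint f with hx0
  -- the polynomial as a continuous function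
  set g : EuclideanSpace ℝ (Fin n) → ℝ := fun x => eval (fun i => x i) P with hg
  have hgcont : Continuous g := by
    exact (MvPolynomial.continuous_eval (p := P)).comp
      (continuous_pi fun i => (continuous_apply i).comp (PiLp.continuousLinearEquiv 2 ℝ _).continuous)
  have hiter : ∀ (x : EuclideanSpace ℝ (Fin n)) (k : ℕ), g (f^[k] x) = C ^ k * g x := by
    intro x k
    induction k with
    | zero => simp
    | succ k ih =>
      rw [Function.iterate_succ_apply', pow_succ]
      calc g (f (f^[k] x)) = C * g (f^[k] x) := hC _
        _ = C ^ k * C * g x := by rw [ih]; ring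
  have hlim : ∀ x, Tendsto (fun k => g (f^[k] x)) atTop (nhds (g x₀)) :=
    fun x => hgcont.continuousAt.tendsto.comp (hcon.tendsto_iterate_fixedPoint x)
  by_contra h
  push_neg at h
  rcases eq_or_lt_of_le h with heq | hlt
  · -- |C| = 1, so C^2 = 1, and P is constant
    have hC2 : C ^ 2 = 1 := by
      have := sq_abs C; rw [← heq] at this; rw [← this]; norm_num
    have h2 : Tendsto (fun k : ℕ => 2 * k) atTop atTop :=
      tendsto_atTop_mono (f := id) (fun k => by simp only [id]; omega) tendsto_id
    have hconst : ∀ x, g x = g x₀ := by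
      intro x
      have h1 : Tendsto (fun k : ℕ => g (f^[2 * k] x)) atTop (nhds (g x₀)) :=
        (hlim x).comp h2
      have h3 : ∀ k : ℕ, g (f^[2 * k] x) = g x := by
        intro k
        rw [hiter, pow_mul, hC2, one_pow, one_mul]
      simp only [h3] at h1
      exact tendsto_nhds_unique tendsto_const_nhds h1
    have hPC : P = MvPolynomial.C (g x₀) := by
      apply MvPolynomial.funext
      intro y
      have := hconst ((EuclideanSpace.equiv (Fin n) ℝ).symm y)
      simpa [hg, eval_C] using this
    rw [hPC, totalDegree_C] at hP
    exact hP rfl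
  · -- |C| > 1 : pick a point where g ≠ 0
    have hPne : ∃ x : EuclideanSpace ℝ (Fin n), g x ≠ 0 := by
      by_contra hall
      push_neg at hall
      have : P = 0 := by
        apply MvPolynomial.funext
        intro y
        simpa [hg] using hall ((EuclideanSpace.equiv (Fin n) ℝ).symm y)
      rw [this, totalDegree_zero] at hP
      exact hP rfl
    obtain ⟨x, hx⟩ := hPne
    have htop : Tendsto (fun k : ℕ => |C| ^ k * |g x|) atTop atTop :=
      (tendsto_pow_atTop_atTop_of_one_lt hlt).atTop_mul_const (abs_pos.mpr hx)
    have habs : Tendsto (fun k : ℕ => |g (f^[k] x)|) atTop (nhds |g x₀|) :=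
      (hlim x).abs
    have : (fun k : ℕ => |g (f^[k] x)|) = fun k => |C| ^ k * |g x| := by
      funext k; rw [hiter, abs_mul, abs_pow]
    rw [this] at habs
    exact (not_tendsto_atTop_of_tendsto_nhds habs) htop
end

section
/- Let n ≥ 2 and a < b. The set {(x₁, …, x_{n−1}, x₁² + ⋯ + x_{n−1}²) : (x₁, …, x_{n−1}) ∈ [a,b]^{n−1}} ⊆ ℝⁿ — the graph of the squared Euclidean norm over the cube [a,b]^{n−1}, which is contained in the paraboloid S(P) for P(x₁,…,xₙ) = x₁² + ⋯ + x_{n−1}² − xₙ — is a non-trivial self-affine set. -/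
/-!
A similarity `u ↦ r • u + c` of `ℝᵐ` lifts to an affine map of `ℝᵐ⁺¹` preserving the paraboloid
`t = ‖u‖²`, because `‖r • u + c‖² = r² ‖u‖² + 2 r ⟪c, u⟫ + ‖c‖²` is affine in `(u, ‖u‖²)`.
Cutting `[a, b]` into `N` intervals of length `(b - a) / N` cuts the cube `[a, b]ᵐ` into `Nᵐ`
images of itself under similarities of ratio `1 / N`, and the lifted maps cover the graph of
`‖·‖²` over the cube by `Nᵐ` affine images of itself. The linear part
`(u, t) ↦ (r • u, 2 r ⟪c, u⟫ + r² t)` is invertible and, as the translations `c` stay bounded,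
has norm `O(1 / N)`, so it contracts once `N` is large.
-/

open Set

lemma EuclideanSpace.norm_le_sum_abs {ι : Type*} [Fintype ι] (v : EuclideanSpace ℝ ι) :
    ‖v‖ ≤ ∑ i, |v i| := by
  calc ‖v‖ = ‖∑ i, v i • EuclideanSpace.basisFun ι ℝ i‖ := by
        congr 1; simpa using ((EuclideanSpace.basisFun ι ℝ).sum_repr v).symm
    _ ≤ ∑ i, ‖v i • EuclideanSpace.basisFun ι ℝ i‖ := norm_sum_le _ _
    _ = ∑ i, |v i| := by simp [norm_smul]

lemma isSelfAffine_of_eq_iUnion {n : ℕ} {ι : Type*} [Finite ι] {E : Set (EuclideanSpace ℝ (Fin n))}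
    (f : ι → EuclideanSpace ℝ (Fin n) → EuclideanSpace ℝ (Fin n)) (hne : E.Nonempty)
    (hc : IsCompact E) (hf : ∀ i, IsAffineContraction (f i)) (hE : E = ⋃ i, f i '' E) :
    IsSelfAffine E := by
  obtain ⟨ℓ, ⟨e⟩⟩ := Finite.exists_equiv_fin ι
  exact ⟨hne, hc, ℓ, f ∘ e.symm, fun _ => hf _,
    hE.trans (e.symm.surjective.iUnion_comp fun i => f i '' E).symm⟩

lemma abs_le_two_mul_of_image_subset {K : Set ℝ} {M r c : ℝ} (hne : K.Nonempty) (hM : ∀ x ∈ K, |x| ≤ M)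
    (hr : |r| ≤ 1) (hc : (fun x => r * x + c) '' K ⊆ K) : |c| ≤ 2 * M := by
  obtain ⟨x, hx⟩ := hne
  have hrx : |r * x| ≤ M := by
    rw [abs_mul]; exact (mul_le_of_le_one_left (abs_nonneg x) hr).trans (hM x hx)
  calc |c| = |(r * x + c) - r * x| := by ring_nf
    _ ≤ |r * x + c| + |r * x| := abs_sub _ _
    _ ≤ 2 * M := by linarith [hM _ (hc (mem_image_of_mem _ hx))]

lemma exists_fin_mem_Icc_add_one {N : ℕ} (hN : 0 < N) {s : ℝ} (hs : s ∈ Icc (0 : ℝ) N) :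
    ∃ k : Fin N, s ∈ Icc (k : ℝ) (k + 1) := by
  refine ⟨⟨min ⌊s⌋₊ (N - 1), by omega⟩, ?_, ?_⟩
  · exact (Nat.cast_le.2 (min_le_left _ _)).trans (Nat.floor_le hs.1)
  · rcases le_total ⌊s⌋₊ (N - 1) with h | h
    · simpa [min_eq_left h] using (Nat.lt_floor_add_one s).le
    · simpa [min_eq_right h, Nat.cast_sub (Nat.one_le_iff_ne_zero.2 hN.ne')] using hs.2

lemma Icc_eq_iUnion_image {a b : ℝ} (hab : a < b) {N : ℕ} (hN : 0 < N) :
    Icc a b = ⋃ k : Fin N,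
      (fun x => (N : ℝ)⁻¹ * x + ((k : ℝ) * (b - a) + (N - 1) * a) / N) '' Icc a b := by
  have hN' : (0 : ℝ) < N := Nat.cast_pos.2 hN
  have hmap : ∀ (k : ℝ) x, (N : ℝ)⁻¹ * x + (k * (b - a) + (N - 1) * a) / N =
      a + (x - a + k * (b - a)) / N := fun k x => by field_simp; ring
  refine subset_antisymm (fun y hy => ?_) (iUnion_subset fun k => ?_)
  · have hba : 0 < b - a := sub_pos.2 hab
    obtain ⟨k, hk₁, hk₂⟩ := exists_fin_mem_Icc_add_one hN (s := N * (y - a) / (b - a))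
      ⟨div_nonneg (mul_nonneg hN'.le (sub_nonneg.2 hy.1)) hba.le,
        (div_le_iff₀ hba).2 (by nlinarith [hy.2])⟩
    rw [le_div_iff₀ hba] at hk₁
    rw [div_le_iff₀ hba] at hk₂
    refine mem_iUnion.2 ⟨k, N * (y - a) - k * (b - a) + a, ⟨by linarith, by linarith⟩, ?_⟩
    simp only [hmap]
    field_simp
    ring
  · rintro _ ⟨x, hx, rfl⟩
    have hk₀ : (0 : ℝ) ≤ k := Nat.cast_nonneg _
    have hk : (k : ℝ) + 1 ≤ N := by exact_mod_cast k.2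
    simp only [hmap]
    constructor
    · have : 0 ≤ (x - a + k * (b - a)) / N := div_nonneg (by nlinarith [hx.1]) hN'.le
      linarith
    · have : (x - a + k * (b - a)) / N ≤ b - a := by
        rw [div_le_iff₀ hN']; nlinarith [hx.2]
      linarith

namespace Paraboloid

variable {m : ℕ}

noncomputable def lift (u : Fin m → ℝ) : EuclideanSpace ℝ (Fin (m + 1)) :=
  WithLp.toLp 2 (Fin.snoc u (∑ i, u i ^ 2))

@[simp] lemma lift_castSucc (u : Fin m → ℝ) (i : Fin m) : lift u i.castSucc = u i := by
  simp [lift]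

@[simp] lemma lift_last (u : Fin m → ℝ) : lift u (Fin.last m) = ∑ i, u i ^ 2 := by
  simp [lift]

lemma continuous_lift : Continuous (lift (m := m)) := by
  unfold lift
  fun_prop

lemma setOf_eq_image_lift (K : Set ℝ) :
    {y : EuclideanSpace ℝ (Fin (m + 1)) |
        (∀ i : Fin m, y i.castSucc ∈ K) ∧ y (Fin.last m) = ∑ i : Fin m, (y i.castSucc) ^ 2} =
      lift '' univ.pi fun _ => K := by
  ext y
  constructor
  · rintro ⟨hK, hlast⟩
    refine ⟨fun i => y i.castSucc, fun i _ => hK i, ?_⟩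
    ext j
    induction j using Fin.lastCases <;> simp [hlast]
  · rintro ⟨u, hu, rfl⟩
    exact ⟨fun i => by simpa using hu i (mem_univ i), by simp⟩

noncomputable def linearPart (c : Fin m → ℝ) (r : ℝ) :
    EuclideanSpace ℝ (Fin (m + 1)) →L[ℝ] EuclideanSpace ℝ (Fin (m + 1)) :=
  LinearMap.toContinuousLinearMap
    { toFun := fun y => WithLp.toLp 2 (Fin.snoc (fun i => r * y i.castSucc)
        (2 * r * ∑ i, c i * y i.castSucc + r ^ 2 * y (Fin.last m)))
      map_add' := fun x y => by
        ext j
        induction j using Fin.lastCases <;>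
          simp [mul_add, Finset.sum_add_distrib, add_add_add_comm]
      map_smul' := fun s y => by
        ext j
        induction j using Fin.lastCases <;>
          simp [Finset.mul_sum, mul_add, mul_left_comm] }

@[simp] lemma linearPart_apply_castSucc (c : Fin m → ℝ) (r : ℝ) (y : EuclideanSpace ℝ (Fin (m + 1)))
    (i : Fin m) : linearPart c r y i.castSucc = r * y i.castSucc := by
  simp [linearPart]

@[simp] lemma linearPart_apply_last (c : Fin m → ℝ) (r : ℝ) (y : EuclideanSpace ℝ (Fin (m + 1))) :
    linearPart c r y (Fin.last m) = 2 * r * ∑ i, c i * y i.castSucc + r ^ 2 * y (Fin.last m) := by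
  simp [linearPart]

noncomputable def affineLift (c : Fin m → ℝ) (r : ℝ) (y : EuclideanSpace ℝ (Fin (m + 1))) :
    EuclideanSpace ℝ (Fin (m + 1)) :=
  linearPart c r y + lift c

lemma affineLift_lift (c : Fin m → ℝ) (r : ℝ) (u : Fin m → ℝ) :
    affineLift c r (lift u) = lift fun i => r * u i + c i := by
  ext j
  induction j using Fin.lastCases with
  | last =>
    have hsq : ∀ i, (r * u i + c i) ^ 2 = 2 * r * (c i * u i) + r ^ 2 * u i ^ 2 + c i ^ 2 :=
      fun i => by ring
    simp only [affineLift, PiLp.add_apply, linearPart_apply_last, lift_castSucc, lift_last, hsq,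
      Finset.sum_add_distrib, Finset.mul_sum]
  | cast i => simp [affineLift, add_comm]

lemma linearPart_injective (c : Fin m → ℝ) {r : ℝ} (hr : r ≠ 0) :
    Function.Injective (linearPart c r) := by
  refine (injective_iff_map_eq_zero _).2 fun y hy => ?_
  have hhead : ∀ i : Fin m, y i.castSucc = 0 := fun i => by
    simpa [hr] using congrArg (· i.castSucc) hy
  have hlast : y (Fin.last m) = 0 := by
    simpa [hhead, hr] using congrArg (· (Fin.last m)) hy
  ext j
  induction j using Fin.lastCases <;> simp [hhead, hlast]

lemma linearPart_bijective (c : Fin m → ℝ) {r : ℝ} (hr : r ≠ 0) :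
    Function.Bijective (linearPart c r) :=
  ⟨linearPart_injective c hr,
    (LinearMap.injective_iff_surjective (f := (linearPart c r).toLinearMap)).1
      (linearPart_injective c hr)⟩

lemma norm_linearPart_apply_le (c : Fin m → ℝ) {r : ℝ} (hr : |r| ≤ 1)
    (y : EuclideanSpace ℝ (Fin (m + 1))) :
    ‖linearPart c r y‖ ≤ |r| * (m + 1 + 2 * ∑ i, |c i|) * ‖y‖ := by
  have hy : ∀ j, |y j| ≤ ‖y‖ := fun j => by simpa using PiLp.norm_apply_le y j
  have hhead : ∑ i : Fin m, |r * y i.castSucc| ≤ |r| * m * ‖y‖ := by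
    calc ∑ i : Fin m, |r * y i.castSucc| = ∑ i : Fin m, |r| * |y i.castSucc| := by
          simp only [abs_mul]
      _ ≤ ∑ _i : Fin m, |r| * ‖y‖ :=
          Finset.sum_le_sum fun i _ => mul_le_mul_of_nonneg_left (hy _) (abs_nonneg r)
      _ = |r| * m * ‖y‖ := by
          simp only [Finset.sum_const, Finset.card_univ, Fintype.card_fin, nsmul_eq_mul]; ring
  have hcross : |∑ i, c i * y i.castSucc| ≤ (∑ i, |c i|) * ‖y‖ := by
    calc |∑ i, c i * y i.castSucc| ≤ ∑ i, |c i * y i.castSucc| := Finset.abs_sum_le_sum_abs _ _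
      _ ≤ ∑ i, |c i| * ‖y‖ := Finset.sum_le_sum fun i _ => by
          rw [abs_mul]; exact mul_le_mul_of_nonneg_left (hy _) (abs_nonneg _)
      _ = (∑ i, |c i|) * ‖y‖ := (Finset.sum_mul ..).symm
  have hsq : |r| ^ 2 * |y (Fin.last m)| ≤ |r| * ‖y‖ := by
    rw [sq, mul_assoc]
    gcongr
    exact (mul_le_of_le_one_left (abs_nonneg _) hr).trans (hy _)
  have hlast : |2 * r * ∑ i, c i * y i.castSucc + r ^ 2 * y (Fin.last m)| ≤
      2 * |r| * ((∑ i, |c i|) * ‖y‖) + |r| * ‖y‖ := by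
    calc _ ≤ 2 * |r| * |∑ i, c i * y i.castSucc| + |r| ^ 2 * |y (Fin.last m)| := by
          refine (abs_add_le _ _).trans_eq ?_
          simp [abs_mul]
      _ ≤ _ := by gcongr
  calc ‖linearPart c r y‖ ≤ ∑ j, |linearPart c r y j| := EuclideanSpace.norm_le_sum_abs _
    _ = ∑ i : Fin m, |r * y i.castSucc| +
          |2 * r * ∑ i, c i * y i.castSucc + r ^ 2 * y (Fin.last m)| := by
        simp [Fin.sum_univ_castSucc]
    _ ≤ |r| * (m + 1 + 2 * ∑ i, |c i|) * ‖y‖ := by linarith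

lemma norm_linearPart_le (c : Fin m → ℝ) {r : ℝ} (hr : |r| ≤ 1) :
    ‖linearPart c r‖ ≤ |r| * (m + 1 + 2 * ∑ i, |c i|) :=
  ContinuousLinearMap.opNorm_le_bound _ (by positivity) (norm_linearPart_apply_le c hr)

lemma isAffineContraction_affineLift (c : Fin m → ℝ) {r : ℝ} (hr₀ : r ≠ 0)
    (hr : |r| * (m + 1 + 2 * ∑ i, |c i|) < 1) : IsAffineContraction (affineLift c r) := by
  have hr₁ : |r| ≤ 1 := by
    have : 0 ≤ (m : ℝ) + 2 * ∑ i, |c i| := by positivity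
    exact (le_mul_of_one_le_right (abs_nonneg r) (by linarith)).trans hr.le
  exact ⟨linearPart c r, lift c, linearPart_bijective c hr₀,
    (norm_linearPart_le c hr₁).trans_lt hr, fun _ => rfl⟩

lemma image_lift_pi_eq_iUnion {ι : Type*} {K : Set ℝ} (c : ι → ℝ) (r : ℝ)
    (hK : K = ⋃ j, (fun x => r * x + c j) '' K) :
    lift '' univ.pi (fun _ : Fin m => K) =
      ⋃ k : Fin m → ι, affineLift (c ∘ k) r '' (lift '' univ.pi fun _ => K) := by
  have hpiece : ∀ k : Fin m → ι, affineLift (c ∘ k) r '' (lift '' univ.pi fun _ => K) =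
      lift '' univ.pi fun i => (fun x => r * x + c (k i)) '' K := by
    intro k
    rw [image_image, ← piMap_image_univ_pi, image_image]
    simp only [affineLift_lift]
    rfl
  rw [iUnion_congr hpiece, ← image_iUnion,
    iUnion_univ_pi (fun (_ : Fin m) j => (fun x => r * x + c j) '' K), ← hK]

/-- Each translation satisfies `|c j| ≤ 2 * M`, so `4 * m * M` bounds the `2 * ∑ i, |c (k i)|` in
`norm_linearPart_le`. -/
theorem isSelfAffine_image_lift_pi {ι : Type*} [Finite ι] {K : Set ℝ} {M r : ℝ} (c : ι → ℝ)
    (hK : IsCompact K) (hne : K.Nonempty) (hM : ∀ x ∈ K, |x| ≤ M) (hr₀ : r ≠ 0)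
    (hr : |r| * (m + 1 + 4 * m * M) < 1) (hKc : K = ⋃ j, (fun x => r * x + c j) '' K) :
    IsSelfAffine (lift '' univ.pi fun _ : Fin m => K) := by
  have hM₀ : 0 ≤ M := hne.elim fun x hx => (abs_nonneg x).trans (hM x hx)
  have hr₁ : |r| ≤ 1 :=
    (le_mul_of_one_le_right (abs_nonneg r) (by nlinarith)).trans hr.le
  have hc : ∀ j, |c j| ≤ 2 * M := fun j => abs_le_two_mul_of_image_subset hne hM hr₁
    ((subset_iUnion (fun j => (fun x => r * x + c j) '' K) j).trans_eq hKc.symm)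
  refine isSelfAffine_of_eq_iUnion _ ((univ_pi_nonempty_iff.2 fun _ => hne).image lift)
    ((isCompact_univ_pi fun _ => hK).image continuous_lift) (fun k => ?_)
    (image_lift_pi_eq_iUnion c r hKc)
  refine isAffineContraction_affineLift _ hr₀ (lt_of_le_of_lt ?_ hr)
  have hsum : ∑ i, |(c ∘ k) i| ≤ m * (2 * M) := by
    simpa using Finset.sum_le_sum fun i (_ : i ∈ Finset.univ) => hc (k i)
  exact mul_le_mul_of_nonneg_left (by linarith) (abs_nonneg r)

lemma image_lift_pi_nontrivial (hm : 0 < m) {K : Set ℝ} (hK : K.Nontrivial) :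
    (lift '' univ.pi fun _ : Fin m => K).Nontrivial := by
  obtain ⟨x, hx, y, hy, hxy⟩ := hK
  refine ⟨lift fun _ => x, mem_image_of_mem _ fun _ _ => hx,
    lift fun _ => y, mem_image_of_mem _ fun _ _ => hy, fun h => hxy ?_⟩
  simpa only [lift_castSucc] using congrArg (· (Fin.castSucc ⟨0, hm⟩)) h

end Paraboloid

/-- Let `n = m + 1 ≥ 2` and `a < b`.  The graph of the squared
Euclidean norm over the cube `[a,b]ᵐ`, i.e. the set
`{(x₁, …, xₘ, x₁² + ⋯ + xₘ²) : (x₁, …, xₘ) ∈ [a,b]ᵐ} ⊆ ℝⁿ`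
(which is contained in the paraboloid `S(P)` for
`P (x₁,…,xₙ) = x₁² + ⋯ + x_{n-1}² − xₙ`), is a non-trivial self-affine set. -/
theorem paraboloid_graph_isSelfAffine
    (m : ℕ) (hm : 1 ≤ m) (a b : ℝ) (hab : a < b) :
    IsSelfAffine {y : EuclideanSpace ℝ (Fin (m + 1)) |
        (∀ i : Fin m, y i.castSucc ∈ Icc a b) ∧
        y (Fin.last m) = ∑ i : Fin m, (y i.castSucc) ^ 2} ∧
    Set.Nontrivial {y : EuclideanSpace ℝ (Fin (m + 1)) |
        (∀ i : Fin m, y i.castSucc ∈ Icc a b) ∧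
        y (Fin.last m) = ∑ i : Fin m, (y i.castSucc) ^ 2} := by
  rw [Paraboloid.setOf_eq_image_lift]
  set M := max |a| |b|
  obtain ⟨N, hN⟩ := exists_nat_gt ((m : ℝ) + 1 + 4 * m * M)
  have hN₀ : (0 : ℝ) < N := lt_of_le_of_lt (by positivity) hN
  have hr : |(N : ℝ)⁻¹| * (m + 1 + 4 * m * M) < 1 := by
    rw [abs_inv, Nat.abs_cast, inv_mul_lt_one₀ hN₀]; exact hN
  exact ⟨Paraboloid.isSelfAffine_image_lift_pi _ isCompact_Icc (nonempty_Icc.2 hab.le)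
      (fun x hx => abs_le_max_abs_abs hx.1 hx.2) (inv_ne_zero hN₀.ne') hr
      (Icc_eq_iUnion_image hab (Nat.cast_pos.1 hN₀)),
    Paraboloid.image_lift_pi_nontrivial hm
      ⟨a, left_mem_Icc.2 hab.le, b, right_mem_Icc.2 hab.le, hab.ne⟩⟩
end

section
/- Let γ: (a,b) → ℝⁿ be a C¹ curve, t₀ ∈ (a,b) with γ'(t₀) ≠ 0, and let M be an invertible n × n real matrix. Suppose there are sequences (t_i) and (t_i') in (a,b) with t_i ≠ t₀ for all i, t_i → t₀, t_i' → t₀, and M(γ(t_i) − γ(t₀)) = γ(t_i') − γ(t₀) for all i. If the limit λ = lim_{i→∞} (t_i' − t₀)/(t_i − t₀) exists, then M γ'(t₀) = λ γ'(t₀) and λ ≠ 0; in particular γ'(t₀) is an eigenvector of M with nonzero real eigenvalue λ. -/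
open Set Filter Topology

/-!
Divide the invariance relation by `tᵢ - t₀`. The left side is `M` applied to a difference quotient
of `γ` at `t₀`, so it tends to `M γ'(t₀)`. The right side is `(tᵢ' - t₀)/(tᵢ - t₀)` times
`γ'(t₀) + ε(tᵢ')`, where `γ s - γ t₀ = (s - t₀) • (γ'(t₀) + ε s)` with `ε` continuous and vanishing
at `t₀`; this form avoids dividing by `tᵢ' - t₀`, which may be zero. So it tends to `λ γ'(t₀)`.
Since `M` is invertible and `γ'(t₀) ≠ 0`, `λ = 0` is impossible.
-/

theorem HasDerivAt.exists_sub_eq_smul_add {𝕜 F : Type*} [NontriviallyNormedField 𝕜]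
    [NormedAddCommGroup F] [NormedSpace 𝕜 F] {f : 𝕜 → F} {f' : F} {x : 𝕜}
    (hf : HasDerivAt f f' x) :
    ∃ ε : 𝕜 → F, Tendsto ε (𝓝 x) (𝓝 0) ∧ ∀ s, f s - f x = (s - x) • (f' + ε s) := by
  classical
  refine ⟨Function.update (fun s => slope f x s - f') x 0, ?_, fun s => ?_⟩
  · have hslope : Tendsto (fun s => slope f x s - f') (𝓝[≠] x) (𝓝 0) := by
      simpa using (hasDerivAt_iff_tendsto_slope.1 hf).sub_const f'
    simpa using (continuousAt_update_same.2 hslope).tendsto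
  · rcases eq_or_ne s x with rfl | hs
    · simp
    · rw [Function.update_of_ne hs, add_sub_cancel, sub_smul_slope, vsub_eq_sub]

theorem HasDerivAt.map_eq_smul_of_tendsto {𝕜 E ι : Type*} [NontriviallyNormedField 𝕜]
    [NormedAddCommGroup E] [NormedSpace 𝕜 E] {f : 𝕜 → E} {f' : E} {x : 𝕜}
    (hf : HasDerivAt f f' x) (L : E →L[𝕜] E) {l : Filter ι} [l.NeBot] {t t' : ι → 𝕜}
    (ht : Tendsto t l (𝓝[≠] x)) (ht' : Tendsto t' l (𝓝 x))
    (hL : ∀ᶠ i in l, L (f (t i) - f x) = f (t' i) - f x) {c : 𝕜}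
    (hc : Tendsto (fun i => (t' i - x) / (t i - x)) l (𝓝 c)) :
    L f' = c • f' := by
  obtain ⟨ε, hε, hfε⟩ := hf.exists_sub_eq_smul_add
  have hleft : Tendsto (fun i => L (slope f x (t i))) l (𝓝 (L f')) :=
    (L.continuous.tendsto f').comp ((hasDerivAt_iff_tendsto_slope.1 hf).comp ht)
  have hright : Tendsto (fun i => ((t' i - x) / (t i - x)) • (f' + ε (t' i))) l
      (𝓝 (c • (f' + 0))) :=
    hc.smul (tendsto_const_nhds.add (hε.comp ht'))
  have heq : ∀ᶠ i in l, L (slope f x (t i)) = ((t' i - x) / (t i - x)) • (f' + ε (t' i)) := by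
    filter_upwards [hL] with i hi
    rw [slope_def_module, L.map_smul, hi, hfε, smul_smul, div_eq_inv_mul]
  simpa using tendsto_nhds_unique (hleft.congr' heq) hright

theorem matrix_invariance_gives_eigenvector_general
    {n : ℕ} (a b : ℝ) (γ γ' : ℝ → (Fin n → ℝ))
    (hderiv : ∀ s ∈ Ioo a b, HasDerivAt γ (γ' s) s)
    (t₀ : ℝ) (ht₀ : t₀ ∈ Ioo a b) (hne : γ' t₀ ≠ 0)
    (M : Matrix (Fin n) (Fin n) ℝ) (hM : IsUnit M)
    (t t' : ℕ → ℝ)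
    (htne : ∀ i, t i ≠ t₀)
    (htlim : Tendsto t atTop (nhds t₀)) (ht'lim : Tendsto t' atTop (nhds t₀))
    (hMγ : ∀ i, M.mulVec (γ (t i) - γ t₀) = γ (t' i) - γ t₀)
    (lam : ℝ)
    (hlam : Tendsto (fun i => (t' i - t₀) / (t i - t₀)) atTop (nhds lam)) :
    M.mulVec (γ' t₀) = lam • γ' t₀ ∧ lam ≠ 0 := by
  have htlim' : Tendsto t atTop (𝓝[≠] t₀) :=
    tendsto_nhdsWithin_iff.2 ⟨htlim, .of_forall htne⟩
  have hmain : M.mulVec (γ' t₀) = lam • γ' t₀ := by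
    simpa using (hderiv t₀ ht₀).map_eq_smul_of_tendsto (Matrix.toLin' M).toContinuousLinearMap
      htlim' ht'lim (.of_forall fun i => by simpa using hMγ i) hlam
  refine ⟨hmain, fun hlam0 => hne (Matrix.mulVec_injective_iff_isUnit.2 hM ?_)⟩
  rw [hmain, hlam0, zero_smul, Matrix.mulVec_zero]

/-- Let `γ : (a,b) → ℝⁿ` be a `C¹` curve, `t₀ ∈ (a,b)` with
`γ' t₀ ≠ 0`, and let `M` be an invertible `n × n` real matrix.  Suppose there are
sequences `(tᵢ)`, `(tᵢ')` in `(a,b)` with `tᵢ ≠ t₀`, `tᵢ → t₀`, `tᵢ' → t₀`, and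
`M (γ tᵢ − γ t₀) = γ tᵢ' − γ t₀` for all `i`.  If `λ = lim (tᵢ' − t₀)/(tᵢ − t₀)`
exists, then `M (γ' t₀) = λ • γ' t₀` and `λ ≠ 0`; in particular `γ' t₀` is an
eigenvector of `M` with nonzero real eigenvalue `λ`. -/
theorem matrix_invariance_gives_eigenvector
    {n : ℕ} (a b : ℝ) (γ γ' : ℝ → (Fin n → ℝ))
    (hC1 : ContDiffOn ℝ 1 γ (Ioo a b))
    (hderiv : ∀ s ∈ Ioo a b, HasDerivAt γ (γ' s) s)
    (t₀ : ℝ) (ht₀ : t₀ ∈ Ioo a b) (hne : γ' t₀ ≠ 0)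
    (M : Matrix (Fin n) (Fin n) ℝ) (hM : IsUnit M)
    (t t' : ℕ → ℝ)
    (htmem : ∀ i, t i ∈ Ioo a b) (ht'mem : ∀ i, t' i ∈ Ioo a b)
    (htne : ∀ i, t i ≠ t₀)
    (htlim : Tendsto t atTop (nhds t₀)) (ht'lim : Tendsto t' atTop (nhds t₀))
    (hMγ : ∀ i, M.mulVec (γ (t i) - γ t₀) = γ (t' i) - γ t₀)
    (lam : ℝ)
    (hlam : Tendsto (fun i => (t' i - t₀) / (t i - t₀)) atTop (nhds lam)) :
    M.mulVec (γ' t₀) = lam • γ' t₀ ∧ lam ≠ 0 :=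
  matrix_invariance_gives_eigenvector_general a b γ γ' hderiv t₀ ht₀ hne M hM t t' htne htlim ht'lim
    hMγ lam hlam
end
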